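/- For α ∈ ℝ, θ > 0, ρ > 0 and every t < θ, the moment generating function of the FTG distribution exists and equals M(t) = (1-t/θ)^{-α} exp(-ρt/θ) Γ(α, ρ(1-t/θ))/Γ(α,ρ). -/

import Mathlib

open MeasureTheory Real Filter Set

noncomputable def uGamma (a r : ℝ) : ℝ := ∫ t in Set.Ioi r, t ^ (a - 1) * Real.exp (-t)

noncomputable def ftg (a θ ρ x : ℝ) : ℝ :=
  θ * (ρ + θ * x) ^ (a - 1) * Real.exp (-(ρ + θ * x)) / uGamma a ρ

noncomputable def pareto (a σ x : ℝ) : ℝ := -a * σ⁻¹ * (1 + x / σ) ^ (a - 1)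

/-!
Tilting the FTG density by `e^{tx}` gives again an FTG density up to a constant: with
`c = 1 - t/θ` one has `tx - (ρ + θx) = -ρt/θ - c(ρ + θx)` and `c(ρ + θx) = ρc + (θ - t)x`, so
`e^{tx} f(x; α, θ, ρ)` is a constant multiple of `f(x; α, θ - t, ρc)`. Every FTG density with
positive parameters integrates to `1` (substitute `y = ρ + θx`), which leaves only the constant.
-/
section AffineSubstitution

variable {E : Type*} [NormedAddCommGroup E] [NormedSpace ℝ E] {a : ℝ}

lemma image_add_mul_Ioi (b : ℝ) (ha : 0 < a) (c : ℝ) :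
    (fun x => b + a * x) '' Ioi c = Ioi (b + a * c) := by
  rw [← image_image (b + ·) (a * ·), image_mul_left_Ioi ha, image_const_add_Ioi]

lemma hasDerivWithinAt_add_mul (b a x : ℝ) (s : Set ℝ) :
    HasDerivWithinAt (fun x => b + a * x) a s x := by
  simpa using ((hasDerivAt_id x).const_mul a).const_add b |>.hasDerivWithinAt

lemma integrableOn_Ioi_smul_comp_add_mul_iff (g : ℝ → E) (b : ℝ) (ha : 0 < a) (c : ℝ) :
    IntegrableOn (fun x => a • g (b + a * x)) (Ioi c) ↔ IntegrableOn g (Ioi (b + a * c)) := by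
  rw [← image_add_mul_Ioi b ha c, integrableOn_image_iff_integrableOn_abs_deriv_smul
    measurableSet_Ioi (fun x _ => hasDerivWithinAt_add_mul b a x _)
    ((add_right_injective b).comp (mul_right_injective₀ ha.ne')).injOn, abs_of_pos ha]

lemma integral_Ioi_smul_comp_add_mul (g : ℝ → E) (b : ℝ) (ha : 0 < a) (c : ℝ) :
    ∫ x in Ioi c, a • g (b + a * x) = ∫ y in Ioi (b + a * c), g y := by
  rw [← image_add_mul_Ioi b ha c, integral_image_eq_integral_abs_deriv_smul
    measurableSet_Ioi (fun x _ => hasDerivWithinAt_add_mul b a x _)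
    ((add_right_injective b).comp (mul_right_injective₀ ha.ne')).injOn, abs_of_pos ha]

end AffineSubstitution

lemma integrableOn_rpow_mul_exp_neg_Ioi (a : ℝ) {r : ℝ} (hr : 0 < r) :
    IntegrableOn (fun z : ℝ => z ^ (a - 1) * exp (-z)) (Ioi r) := by
  refine integrable_of_isBigO_exp_neg one_half_pos ?_ ?_
  · exact ContinuousOn.mul
      (fun z hz => (continuousAt_rpow_const z _ (Or.inl (hr.trans_le hz).ne')).continuousWithinAt)
      (continuous_exp.comp continuous_neg).continuousOn
  · simpa only [mul_comm] using (Gamma_integrand_isLittleO (a - 1)).isBigO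

lemma uGamma_pos (a : ℝ) {r : ℝ} (hr : 0 < r) : 0 < uGamma a r := by
  have hsupp : Function.support (fun z : ℝ => z ^ (a - 1) * exp (-z)) ∩ Ioi r = Ioi r :=
    inter_eq_self_of_subset_right fun z hz =>
      mul_ne_zero (rpow_pos_of_pos (hr.trans hz) _).ne' (exp_pos _).ne'
  rw [uGamma,
    setIntegral_pos_iff_support_of_nonneg_ae ?_ (integrableOn_rpow_mul_exp_neg_Ioi a hr), hsupp,
    volume_Ioi]
  · exact ENNReal.zero_lt_top
  · filter_upwards [ae_restrict_mem measurableSet_Ioi] with z hz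
    have := hr.trans hz
    positivity

lemma ftg_eq_inv_uGamma_mul (a θ ρ : ℝ) :
    ftg a θ ρ =
      fun x => (uGamma a ρ)⁻¹ * (θ • (fun z => z ^ (a - 1) * exp (-z)) (ρ + θ * x)) := by
  ext x
  simp only [ftg, smul_eq_mul]
  ring

lemma integrableOn_ftg (a : ℝ) {θ ρ : ℝ} (hθ : 0 < θ) (hρ : 0 < ρ) :
    IntegrableOn (ftg a θ ρ) (Ioi 0) := by
  rw [ftg_eq_inv_uGamma_mul]
  have hg := integrableOn_rpow_mul_exp_neg_Ioi a hρ
  rw [← add_zero ρ, ← mul_zero θ, ← integrableOn_Ioi_smul_comp_add_mul_iff _ ρ hθ 0] at hg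
  exact hg.const_mul _

lemma integral_ftg (a : ℝ) {θ ρ : ℝ} (hθ : 0 < θ) (hρ : 0 < ρ) :
    ∫ x in Ioi 0, ftg a θ ρ x = 1 := by
  rw [ftg_eq_inv_uGamma_mul, integral_const_mul,
    integral_Ioi_smul_comp_add_mul (fun z => z ^ (a - 1) * exp (-z)) ρ hθ 0, mul_zero, add_zero,
    ← uGamma, inv_mul_cancel₀ (uGamma_pos a hρ).ne']

lemma exp_mul_ftg {α θ ρ t x : ℝ} (hθ : 0 < θ) (hρ : 0 < ρ) (ht : t < θ) (hx : 0 ≤ ρ + θ * x) :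
    exp (t * x) * ftg α θ ρ x =
      (1 - t / θ) ^ (-α) * exp (-ρ * t / θ) * uGamma α (ρ * (1 - t / θ)) / uGamma α ρ *
        ftg α (θ - t) (ρ * (1 - t / θ)) x := by
  set c := 1 - t / θ with hc_def
  have hc : 0 < c := sub_pos.2 ((div_lt_one hθ).2 ht)
  have hθt : θ - t = c * θ := by rw [hc_def]; field_simp
  have hshift : ρ * c + c * θ * x = c * (ρ + θ * x) := by ring
  have hexp : exp (t * x) * exp (-(ρ + θ * x)) = exp (-ρ * t / θ) * exp (-(c * (ρ + θ * x))) := by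
    rw [← exp_add, ← exp_add, hc_def]
    congr 1
    field_simp
    ring
  have hpow : c ^ (-α) * c * c ^ (α - 1) = 1 := by
    rw [← rpow_add_one hc.ne', ← rpow_add hc]
    simp
  have hU := (uGamma_pos α (mul_pos hρ hc)).ne'
  rw [ftg, ftg, hθt, hshift, mul_rpow hc.le hx]
  calc
    _ = θ * (ρ + θ * x) ^ (α - 1) * (exp (t * x) * exp (-(ρ + θ * x))) / uGamma α ρ := by ring
    _ = c ^ (-α) * c * c ^ (α - 1) * (uGamma α (ρ * c) / uGamma α (ρ * c)) *
          (θ * (ρ + θ * x) ^ (α - 1) * (exp (-ρ * t / θ) * exp (-(c * (ρ + θ * x))))) /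
            uGamma α ρ := by
      rw [hpow, div_self hU, hexp]
      ring
    _ = _ := by ring

theorem ftg_mgf (α θ ρ t : ℝ) (hθ : 0 < θ) (hρ : 0 < ρ) (ht : t < θ) :
    MeasureTheory.IntegrableOn (fun x : ℝ => Real.exp (t * x) * ftg α θ ρ x) (Set.Ioi 0) ∧
    (∫ x in Set.Ioi (0:ℝ), Real.exp (t * x) * ftg α θ ρ x) =
      (1 - t / θ) ^ (-α) * Real.exp (-ρ * t / θ) *
        uGamma α (ρ * (1 - t / θ)) / uGamma α ρ := by
  have hθt : 0 < θ - t := sub_pos.2 ht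
  have hρt : 0 < ρ * (1 - t / θ) := mul_pos hρ (sub_pos.2 ((div_lt_one hθ).2 ht))
  have htilt : EqOn (fun x => exp (t * x) * ftg α θ ρ x)
      (fun x => (1 - t / θ) ^ (-α) * exp (-ρ * t / θ) * uGamma α (ρ * (1 - t / θ)) /
        uGamma α ρ * ftg α (θ - t) (ρ * (1 - t / θ)) x) (Ioi 0) :=
    fun x hx => exp_mul_ftg hθ hρ ht (by have : 0 < x := hx; positivity)
  refine ⟨IntegrableOn.congr_fun ((integrableOn_ftg α hθt hρt).const_mul _) htilt.symm
    measurableSet_Ioi, ?_⟩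
  rw [setIntegral_congr_fun measurableSet_Ioi htilt, integral_const_mul, integral_ftg α hθt hρt,
    mul_one]
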